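/- arXiv:1702.00757 — 3 statements merged into one kernel-verified Lean document; each statement's English description precedes it below -/
import Mathlib

section
/- For positive constants μ_m, μ_p and any ε > 0, the equation β² − ε²μ_mμ_p = ε(μ_m+μ_p)β·cot(2β) has a unique solution β in the open interval (0, π/2). -/
open Real Set Filter Topology

theorem unique_beta (μm μp ε : ℝ) (hμm : 0 < μm) (hμp : 0 < μp) (hε : 0 < ε) :
    ∃! β : ℝ, β ∈ Set.Ioo 0 (π / 2) ∧
      β ^ 2 - ε ^ 2 * (μm * μp) = ε * (μm + μp) * β * (Real.cos (2 * β) / Real.sin (2 * β)) := by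
  set a := ε * (μm + μp) with ha_def
  set c := ε ^ 2 * (μm * μp) with hc_def
  have ha : 0 < a := by positivity
  have hc : 0 < c := by positivity
  have hpi_pos := Real.pi_pos
  have hpi2 : (0:ℝ) < π / 2 := by positivity
  set g : ℝ → ℝ := fun β => (β ^ 2 - c) / (a * β) - Real.cos (2 * β) / Real.sin (2 * β)
    with hg_def
  have hsin : ∀ β ∈ Ioo (0:ℝ) (π/2), 0 < Real.sin (2 * β) := by
    intro β hβ
    exact Real.sin_pos_of_pos_of_lt_pi (by linarith [hβ.1]) (by linarith [hβ.2])
  have hequiv : ∀ β ∈ Ioo (0:ℝ) (π/2),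
      (β ^ 2 - c = a * β * (Real.cos (2*β) / Real.sin (2*β))) ↔ g β = 0 := by
    intro β hβ
    have h1 : a * β ≠ 0 := ne_of_gt (mul_pos ha hβ.1)
    simp only [hg_def, sub_eq_zero, div_eq_iff h1]
    rw [mul_comm (a * β)]
  -- strict monotonicity
  have hmono : StrictMonoOn g (Ioo 0 (π/2)) := by
    have h1 : StrictMonoOn (fun β : ℝ => (β ^ 2 - c) / (a * β)) (Ioo 0 (π/2)) := by
      intro x hx y hy hxy
      simp only
      rw [div_lt_div_iff₀ (mul_pos ha hx.1) (mul_pos ha hy.1)]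
      nlinarith [mul_pos ha (mul_pos (mul_pos hx.1 hy.1) (sub_pos.mpr hxy)),
        mul_pos ha (mul_pos hc (sub_pos.mpr hxy))]
    have key : ∀ β ∈ Ioo (0:ℝ) (π/2),
        -(Real.cos (2*β) / Real.sin (2*β)) = Real.tan (2*β - π/2) := by
      intro β hβ
      rw [Real.tan_eq_sin_div_cos,
        show (2*β - π/2 : ℝ) = -(π/2 - 2*β) by ring, Real.sin_neg, Real.cos_neg,
        Real.sin_pi_div_two_sub, Real.cos_pi_div_two_sub, neg_div]
    have h2 : StrictMonoOn (fun β : ℝ => -(Real.cos (2*β) / Real.sin (2*β))) (Ioo 0 (π/2)) := by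
      intro x hx y hy hxy
      simp only
      rw [key x hx, key y hy]
      exact Real.strictMonoOn_tan ⟨by linarith [hx.1], by linarith [hx.2]⟩
        ⟨by linarith [hy.1], by linarith [hy.2]⟩ (by linarith)
    intro x hx y hy hxy
    have := add_lt_add (h1 hx hy hxy) (h2 hx hy hxy)
    simpa [hg_def, sub_eq_add_neg] using this
  -- continuity
  have hcont : ContinuousOn g (Ioo 0 (π/2)) := by
    apply ContinuousOn.sub
    · exact ContinuousOn.div (by fun_prop) (by fun_prop)
        (fun β hβ => ne_of_gt (mul_pos ha hβ.1))
    · exact ContinuousOn.div (by fun_prop) (by fun_prop)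
        (fun β hβ => ne_of_gt (hsin β hβ))
  -- a point where g < 0
  have hsqrt_pos : 0 < Real.sqrt c := Real.sqrt_pos.mpr hc
  set β₁ : ℝ := min (Real.sqrt c) (π/4) / 2 with hβ₁_def
  have hβ₁pos : 0 < β₁ := by
    rw [hβ₁_def]
    have : (0:ℝ) < min (Real.sqrt c) (π/4) := lt_min hsqrt_pos (by linarith)
    linarith
  have hβ₁lt4 : β₁ < π/4 := by
    have h1 : min (Real.sqrt c) (π/4) ≤ π/4 := min_le_right _ _
    rw [hβ₁_def]; linarith
  have hβ₁mem : β₁ ∈ Ioo (0:ℝ) (π/2) := ⟨hβ₁pos, by linarith⟩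
  have hβ₁sq : β₁ ^ 2 < c := by
    have h1 : β₁ < Real.sqrt c := by
      have : min (Real.sqrt c) (π/4) ≤ Real.sqrt c := min_le_left _ _
      rw [hβ₁_def]; linarith
    have h2 := Real.sq_sqrt hc.le
    nlinarith
  have hgβ₁ : g β₁ < 0 := by
    have hterm1 : (β₁ ^ 2 - c) / (a * β₁) < 0 :=
      div_neg_of_neg_of_pos (by linarith) (mul_pos ha hβ₁pos)
    have hcospos : 0 < Real.cos (2 * β₁) :=
      Real.cos_pos_of_mem_Ioo ⟨by linarith, by linarith⟩
    have hterm2 : 0 < Real.cos (2 * β₁) / Real.sin (2 * β₁) :=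
      div_pos hcospos (hsin β₁ hβ₁mem)
    simp only [hg_def]
    linarith
  -- eventually g > 0 near π/2
  have hmem : ∀ᶠ β in 𝓝[<] (π/2), β ∈ Ioo (0:ℝ) (π/2) :=
    Ioo_mem_nhdsLT_of_mem ⟨hpi2, le_refl _⟩
  have t1 : Tendsto (fun β : ℝ => (β^2 - c)/(a*β)) (𝓝[<] (π/2))
      (𝓝 (((π/2)^2 - c)/(a*(π/2)))) := by
    apply Tendsto.mono_left _ nhdsWithin_le_nhds
    exact (ContinuousAt.div (by fun_prop) (by fun_prop)
      (ne_of_gt (mul_pos ha hpi2))).tendsto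
  have tsin : Tendsto (fun β : ℝ => Real.sin (2*β)) (𝓝[<] (π/2)) (𝓝[>] 0) := by
    rw [tendsto_nhdsWithin_iff]
    constructor
    · have h0 : Tendsto (fun β : ℝ => Real.sin (2*β)) (𝓝 (π/2)) (𝓝 (Real.sin (2*(π/2)))) := by
        exact (Real.continuous_sin.comp (continuous_const.mul continuous_id)).continuousAt
      have : Real.sin (2*(π/2)) = 0 := by
        rw [show (2*(π/2) : ℝ) = π by ring, Real.sin_pi]
      rw [this] at h0
      exact h0.mono_left nhdsWithin_le_nhds
    · filter_upwards [hmem] with β hβ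
      exact hsin β hβ
  have tinv : Tendsto (fun β : ℝ => (Real.sin (2*β))⁻¹) (𝓝[<] (π/2)) atTop :=
    tsin.inv_tendsto_nhdsGT_zero
  have tcos : Tendsto (fun β : ℝ => Real.cos (2*β)) (𝓝[<] (π/2)) (𝓝 (-1)) := by
    have h0 : Tendsto (fun β : ℝ => Real.cos (2*β)) (𝓝 (π/2)) (𝓝 (Real.cos (2*(π/2)))) :=
      (Real.continuous_cos.comp (continuous_const.mul continuous_id)).continuousAt
    have : Real.cos (2*(π/2)) = -1 := by
      rw [show (2*(π/2) : ℝ) = π by ring, Real.cos_pi]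
    rw [this] at h0
    exact h0.mono_left nhdsWithin_le_nhds
  have t2 : Tendsto (fun β : ℝ => Real.cos (2*β) * (Real.sin (2*β))⁻¹)
      (𝓝[<] (π/2)) atBot := tcos.neg_mul_atTop (by norm_num) tinv
  have t2' : Tendsto (fun β : ℝ => -(Real.cos (2*β) / Real.sin (2*β)))
      (𝓝[<] (π/2)) atTop := by
    have := tendsto_neg_atBot_atTop.comp t2
    simpa [div_eq_mul_inv, Function.comp_def] using this
  have tg : Tendsto g (𝓝[<] (π/2)) atTop := by
    have := t1.add_atTop t2'
    simpa [hg_def, sub_eq_add_neg] using this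
  have hright : ∀ᶠ β in 𝓝[<] (π/2), 0 < g β := tg.eventually_gt_atTop 0
  obtain ⟨β₂, hgβ₂, hβ₂mem⟩ := (hright.and hmem).exists
  -- β₁ < β₂
  have hβ₁β₂ : β₁ < β₂ := by
    rcases lt_trichotomy β₁ β₂ with h | h | h
    · exact h
    · exfalso; rw [h] at hgβ₁; linarith
    · exfalso
      have := hmono hβ₂mem hβ₁mem h
      linarith
  -- IVT
  have hsub : Icc β₁ β₂ ⊆ Ioo (0:ℝ) (π/2) := fun x hx =>
    ⟨lt_of_lt_of_le hβ₁pos hx.1, lt_of_le_of_lt hx.2 hβ₂mem.2⟩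
  have h0mem : (0:ℝ) ∈ Ioo (g β₁) (g β₂) := ⟨hgβ₁, hgβ₂⟩
  obtain ⟨β₀, hβ₀mem', hgβ₀⟩ := intermediate_value_Ioo hβ₁β₂.le (hcont.mono hsub) h0mem
  have hβ₀mem : β₀ ∈ Ioo (0:ℝ) (π/2) :=
    hsub ⟨hβ₀mem'.1.le, hβ₀mem'.2.le⟩
  refine ⟨β₀, ⟨hβ₀mem, (hequiv β₀ hβ₀mem).mpr hgβ₀⟩, ?_⟩
  rintro β ⟨hβmem, hβeq⟩
  have h0 : g β = 0 := (hequiv β hβmem).mp hβeq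
  exact hmono.injOn hβmem hβ₀mem (by rw [h0, hgβ₀])
end

section
/- If μ_m, μ_p > 0, ε > 0 and k real with 0 ≤ −k ≤ μ_mμ_p, then every root λ ∈ ℂ of the characteristic equation (λ + εμ_m)(λ + εμ_p) = ε²k e^{−2λ} with Re λ = 0 must satisfy λ = 0 and additionally μ_mμ_p = k; in particular if 0 ≤ −k < μ_mμ_p there is no purely imaginary root (including 0). -/
lemma no_root_aux (μm μp ε k : ℝ) (hμm : 0 < μm) (hμp : 0 < μp) (hε : 0 < ε)
    (hk0 : 0 ≤ -k) (hk1 : -k ≤ μm * μp) (lam : ℂ)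
    (h : (lam + ε * μm) * (lam + ε * μp) = (ε : ℂ) ^ 2 * k * Complex.exp (-2 * lam))
    (hre : lam.re = 0) : False := by
  have h2 := congrArg Complex.normSq h
  rw [map_mul, map_mul, map_mul] at h2
  have hexp : Complex.normSq (Complex.exp (-2 * lam)) = 1 := by
    rw [Complex.normSq_eq_norm_sq, Complex.norm_exp]
    simp [hre]
  rw [hexp, show ((ε : ℂ) ^ 2) = ((ε ^ 2 : ℝ) : ℂ) by push_cast; ring,
    Complex.normSq_ofReal, Complex.normSq_ofReal] at h2
  simp only [Complex.normSq_apply, Complex.add_re, Complex.add_im, Complex.mul_re,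
    Complex.mul_im, Complex.ofReal_re, Complex.ofReal_im, hre] at h2
  have hkk : k * k ≤ (μm * μp) * (μm * μp) := by nlinarith
  have hy2 : lam.im ^ 2 ≤ 0 := by
    nlinarith [sq_nonneg lam.im, sq_nonneg (lam.im ^ 2),
      mul_pos (mul_pos hε hμm) (mul_pos hε hμm), mul_pos (mul_pos hε hμp) (mul_pos hε hμp),
      mul_pos (mul_pos hε hε) (mul_pos hμm hμp), sq_nonneg ε]
  have him : lam.im = 0 := by
    have h0 : lam.im ^ 2 = 0 := le_antisymm hy2 (sq_nonneg _)
    exact pow_eq_zero_iff (by norm_num) |>.mp h0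
  have hlam : lam = 0 := Complex.ext hre him
  subst hlam
  simp only [zero_add, neg_mul, mul_zero, neg_zero, Complex.exp_zero, mul_one] at h
  have hreal : (ε * μm) * (ε * μp) = ε ^ 2 * k := by exact_mod_cast h
  nlinarith [mul_pos hμm hμp, sq_nonneg ε, mul_pos hε hε]

theorem no_purely_imaginary_root (μm μp ε k : ℝ) (hμm : 0 < μm) (hμp : 0 < μp) (hε : 0 < ε)
    (hk0 : 0 ≤ -k) (hk1 : -k ≤ μm * μp) :
    (∀ lam : ℂ, (lam + ε * μm) * (lam + ε * μp) = (ε : ℂ) ^ 2 * k * Complex.exp (-2 * lam) →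
      lam.re = 0 → lam = 0 ∧ μm * μp = k) ∧
    (-k < μm * μp →
      ¬ ∃ lam : ℂ, (lam + ε * μm) * (lam + ε * μp) = (ε : ℂ) ^ 2 * k * Complex.exp (-2 * lam) ∧
        lam.re = 0) := by
  constructor
  · intro lam h hre
    exact (no_root_aux μm μp ε k hμm hμp hε hk0 hk1 lam h hre).elim
  · rintro _ ⟨lam, h, hre⟩
    exact no_root_aux μm μp ε k hμm hμp hε hk0 hk1 lam h hre
end

section
/- Let x, y : [−α₀, ∞) → ℝ be C¹ solutions of x'(t) = −μ_m x(t) + α_m/(1 + (y(t−τ(t))/ȳ)^h) and y'(t) = −μ_p y(t) + α_p x(t−τ(t)) with all parameters positive, and suppose t − τ(t) ∈ [−α₀, t) for all t ≥ 0, with x, y > 0 on [−α₀, 0]. Then x(t) > 0 and y(t) > 0 for all t ≥ 0. -/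
/-- If a function is positive on `[0, t₀)`, vanishes at `t₀ > 0`, and has a
positive derivative at `t₀`, we get a contradiction. -/
lemma hes1_no_touch (f : ℝ → ℝ) (t₀ d : ℝ) (hd : HasDerivAt f d t₀)
    (hdpos : 0 < d) (hf0 : f t₀ = 0) (ht₀ : 0 < t₀)
    (hfpos : ∀ s, 0 ≤ s → s < t₀ → 0 < f s) : False := by
  have hslope : Filter.Tendsto (slope f t₀) (nhdsWithin t₀ {t₀}ᶜ) (nhds d) :=
    hasDerivAt_iff_tendsto_slope.mp hd
  have hle : nhdsWithin t₀ (Set.Iio t₀) ≤ nhdsWithin t₀ {t₀}ᶜ := by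
    apply nhdsWithin_mono
    intro s hs
    exact ne_of_lt hs
  have h1 : ∀ᶠ s in nhdsWithin t₀ (Set.Iio t₀), 0 < slope f t₀ s :=
    (hslope.mono_left hle).eventually (eventually_gt_nhds hdpos)
  have h2 : ∀ᶠ s in nhdsWithin t₀ (Set.Iio t₀), 0 < s :=
    eventually_nhdsWithin_of_eventually_nhds (eventually_gt_nhds ht₀)
  have h3 : ∀ᶠ s in nhdsWithin t₀ (Set.Iio t₀), s < t₀ :=
    eventually_mem_nhdsWithin
  obtain ⟨s, hs1, hs2, hs3⟩ := (h1.and (h2.and h3)).exists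
  have hfs : 0 < f s := hfpos s hs2.le hs3
  rw [slope_def_field, hf0, sub_zero] at hs1
  rcases div_pos_iff.mp hs1 with ⟨h, h'⟩ | ⟨h, h'⟩ <;> linarith

theorem hes1_positivity (μm μp αm αp ybar hh α₀ : ℝ)
    (hμm : 0 < μm) (hμp : 0 < μp) (hαm : 0 < αm) (hαp : 0 < αp)
    (hy : 0 < ybar) (hhh : 0 < hh) (hα₀ : 0 < α₀)
    (x y τ : ℝ → ℝ)
    (hτ : ∀ t : ℝ, 0 ≤ t → -α₀ ≤ t - τ t ∧ t - τ t < t)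
    (hxc : ContinuousOn x (Set.Ici (-α₀))) (hyc : ContinuousOn y (Set.Ici (-α₀)))
    (hdx : ∀ t : ℝ, 0 ≤ t →
      HasDerivAt x (-μm * x t + αm / (1 + (y (t - τ t) / ybar) ^ hh)) t)
    (hdy : ∀ t : ℝ, 0 ≤ t → HasDerivAt y (-μp * y t + αp * x (t - τ t)) t)
    (hx0 : ∀ t ∈ Set.Icc (-α₀) (0:ℝ), 0 < x t)
    (hy0 : ∀ t ∈ Set.Icc (-α₀) (0:ℝ), 0 < y t) :
    ∀ t : ℝ, 0 ≤ t → 0 < x t ∧ 0 < y t := by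
  by_contra hcon
  push_neg at hcon
  obtain ⟨tb, htb0, htbbad⟩ := hcon
  set S : Set ℝ := {t : ℝ | 0 ≤ t ∧ (x t ≤ 0 ∨ y t ≤ 0)} with hS
  have hSne : S.Nonempty := by
    refine ⟨tb, htb0, ?_⟩
    by_cases hx : 0 < x tb
    · exact Or.inr (htbbad hx)
    · exact Or.inl (not_lt.mp hx)
  have hSbdd : BddBelow S := ⟨0, fun s hs => hs.1⟩
  set t₀ : ℝ := sInf S with ht₀def
  -- continuity at points of Ici (-α₀) that are > -α₀ is full continuity
  have hxcont : ∀ t : ℝ, -α₀ < t → ContinuousAt x t := fun t ht =>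
    (hxc t ht.le).continuousAt (Ici_mem_nhds ht)
  have hycont : ∀ t : ℝ, -α₀ < t → ContinuousAt y t := fun t ht =>
    (hyc t ht.le).continuousAt (Ici_mem_nhds ht)
  -- t₀ > 0
  have ht₀pos : 0 < t₀ := by
    have hx0' : 0 < x 0 := hx0 0 ⟨by linarith, le_refl 0⟩
    have hy0' : 0 < y 0 := hy0 0 ⟨by linarith, le_refl 0⟩
    have hxev : ∀ᶠ s in nhds (0:ℝ), 0 < x s :=
      (hxcont 0 (by linarith)).eventually (eventually_gt_nhds hx0')
    have hyev : ∀ᶠ s in nhds (0:ℝ), 0 < y s :=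
      (hycont 0 (by linarith)).eventually (eventually_gt_nhds hy0')
    obtain ⟨ε, hε, hball⟩ := Metric.eventually_nhds_iff.mp (hxev.and hyev)
    have : ε ≤ t₀ := le_csInf hSne (by
      intro s hs
      by_contra hlt
      push_neg at hlt
      have : dist s 0 < ε := by
        rw [Real.dist_eq, sub_zero, abs_of_nonneg hs.1]; exact hlt
      have := hball this
      rcases hs.2 with h | h <;> linarith [this.1, this.2])
    linarith
  have ht₀nonneg : 0 ≤ t₀ := ht₀pos.le
  -- positivity strictly before t₀
  have hpos : ∀ s, 0 ≤ s → s < t₀ → 0 < x s ∧ 0 < y s := by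
    intro s hs0 hst
    have hns : s ∉ S := notMem_of_lt_csInf hst hSbdd
    rw [hS, Set.mem_setOf_eq] at hns
    push_neg at hns
    exact hns hs0
  have hposext : ∀ s, -α₀ ≤ s → s < t₀ → 0 < x s ∧ 0 < y s := by
    intro s hs0 hst
    by_cases h : 0 ≤ s
    · exact hpos s h hst
    · push_neg at h
      exact ⟨hx0 s ⟨hs0, h.le⟩, hy0 s ⟨hs0, h.le⟩⟩
  -- x t₀ ≥ 0 and y t₀ ≥ 0
  have hleft : (nhdsWithin t₀ (Set.Iio t₀)).NeBot := nhdsLT_neBot t₀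
  have hxge : 0 ≤ x t₀ := by
    refine ge_of_tendsto ((hxcont t₀ (by linarith)).tendsto.mono_left (nhdsWithin_le_nhds : nhdsWithin t₀ (Set.Iio t₀) ≤ nhds t₀)) ?_
    have h2 : ∀ᶠ s in nhdsWithin t₀ (Set.Iio t₀), 0 < s :=
      eventually_nhdsWithin_of_eventually_nhds (eventually_gt_nhds ht₀pos)
    filter_upwards [h2, eventually_mem_nhdsWithin] with s hs1 hs2
    exact (hpos s hs1.le hs2).1.le
  have hyge : 0 ≤ y t₀ := by
    refine ge_of_tendsto ((hycont t₀ (by linarith)).tendsto.mono_left (nhdsWithin_le_nhds : nhdsWithin t₀ (Set.Iio t₀) ≤ nhds t₀)) ?_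
    have h2 : ∀ᶠ s in nhdsWithin t₀ (Set.Iio t₀), 0 < s :=
      eventually_nhdsWithin_of_eventually_nhds (eventually_gt_nhds ht₀pos)
    filter_upwards [h2, eventually_mem_nhdsWithin] with s hs1 hs2
    exact (hpos s hs1.le hs2).2.le
  -- x t₀ ≤ 0 or y t₀ ≤ 0
  have hzero : x t₀ ≤ 0 ∨ y t₀ ≤ 0 := by
    by_contra hno
    push_neg at hno
    have hxev : ∀ᶠ s in nhds t₀, 0 < x s :=
      (hxcont t₀ (by linarith)).eventually (eventually_gt_nhds hno.1)
    have hyev : ∀ᶠ s in nhds t₀, 0 < y s :=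
      (hycont t₀ (by linarith)).eventually (eventually_gt_nhds hno.2)
    obtain ⟨ε, hε, hball⟩ := Metric.eventually_nhds_iff.mp (hxev.and hyev)
    obtain ⟨s, hsS, hslt⟩ := exists_lt_of_csInf_lt hSne (by linarith : t₀ < t₀ + ε)
    have hsge : t₀ ≤ s := csInf_le hSbdd hsS
    have : dist s t₀ < ε := by
      rw [Real.dist_eq, abs_of_nonneg (by linarith)]; linarith
    have := hball this
    rcases hsS.2 with h | h <;> linarith [this.1, this.2]
  -- delayed argument is in [-α₀, t₀)
  obtain ⟨hτ1, hτ2⟩ := hτ t₀ ht₀nonneg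
  have hdelay := hposext (t₀ - τ t₀) hτ1 hτ2
  rcases hzero with h | h
  · -- x t₀ = 0
    have hx0' : x t₀ = 0 := le_antisymm h hxge
    have hd := hdx t₀ ht₀nonneg
    have hdpos : 0 < -μm * x t₀ + αm / (1 + (y (t₀ - τ t₀) / ybar) ^ hh) := by
      rw [hx0']
      have hyp : 0 < y (t₀ - τ t₀) / ybar := div_pos hdelay.2 hy
      have := Real.rpow_pos_of_pos hyp hh
      have : 0 < 1 + (y (t₀ - τ t₀) / ybar) ^ hh := by linarith
      have := div_pos hαm this
      linarith
    exact hes1_no_touch x t₀ _ hd hdpos hx0' ht₀pos (fun s hs0 hst => (hpos s hs0 hst).1)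
  · -- y t₀ = 0
    have hy0' : y t₀ = 0 := le_antisymm h hyge
    have hd := hdy t₀ ht₀nonneg
    have hdpos : 0 < -μp * y t₀ + αp * x (t₀ - τ t₀) := by
      rw [hy0']
      have := mul_pos hαp hdelay.1
      linarith
    exact hes1_no_touch y t₀ _ hd hdpos hy0' ht₀pos (fun s hs0 hst => (hpos s hs0 hst).2)
end
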